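/- arXiv:2604.02087 — 6 statements merged into one kernel-verified Lean document; each statement's English description precedes it below -/
import Mathlib

section
/- Suppose n ≥ 3 and i_1, …, i_n ∈ Λ satisfy: (i_1, i_k) ∈ Δ for all 1 < k ≤ n, and (i_k, i_{k+1}) ∈ Δ for all 1 ≤ k < n. Then (i_k, i_j) ∈ Δ for all 1 ≤ k < j ≤ n; in particular, i_1, …, i_n are pairwise distinct. -/
open scoped Classical

/-- Suppose `n ≥ 3` and `i₁, …, iₙ ∈ Λ` satisfy `(i₁, i_k) ∈ Δ` for all `1 < k ≤ n` and
`(i_k, i_{k+1}) ∈ Δ` for all `1 ≤ k < n`. Then `(i_k, i_j) ∈ Δ` for all `1 ≤ k < j ≤ n`;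
in particular `i₁, …, iₙ` are pairwise distinct. -/
theorem mcLain_chain_mem_and_distinct {Λ : Type*} (Δ : Set (Λ × Λ))
    (hA1 : ∀ i : Λ, (i, i) ∉ Δ)
    (hA2 : ∀ i j k l : Λ, (i, j) ∈ Δ → (j, k) ∈ Δ → (k, l) ∈ Δ → (i, l) ∈ Δ →
      ((i, k) ∈ Δ ↔ (j, l) ∈ Δ))
    (n : ℕ) (hn : 3 ≤ n) (i : ℕ → Λ)
    (h1 : ∀ k : ℕ, 1 < k → k ≤ n → (i 1, i k) ∈ Δ)
    (h2 : ∀ k : ℕ, 1 ≤ k → k < n → (i k, i (k + 1)) ∈ Δ) :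
    (∀ k j : ℕ, 1 ≤ k → k < j → j ≤ n → (i k, i j) ∈ Δ) ∧
    (∀ k j : ℕ, 1 ≤ k → k < j → j ≤ n → i k ≠ i j) := by
  have main : ∀ j k : ℕ, 1 ≤ k → k < j → j ≤ n → (i k, i j) ∈ Δ := by
    intro j
    induction j using Nat.strong_induction_on with
    | _ j ih =>
      intro k hk hkj hjn
      rcases eq_or_lt_of_le (Nat.succ_le_of_lt hkj) with h | h
      · have := h2 k hk (by omega)
        rwa [show k + 1 = j from h] at this
      · rcases eq_or_lt_of_le hk with hk1 | hk2
        · exact hk1 ▸ h1 j (by omega) hjn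
        · have hj1 : j - 1 + 1 = j := by omega
          have hA := hA2 (i 1) (i k) (i (j - 1)) (i j)
            (h1 k (by omega) (by omega))
            (ih (j - 1) (by omega) k (by omega) (by omega) (by omega))
            (hj1 ▸ h2 (j - 1) (by omega) (by omega))
            (h1 j (by omega) hjn)
          exact hA.mp (h1 (j - 1) (by omega) (by omega))
  refine ⟨fun k j hk => main j k hk, fun k j hk hkj hjn heq => ?_⟩
  exact hA1 (i j) (heq ▸ main j k hk hkj hjn)
end

section
/- If Γ₁ and Γ₂ are normal subsets of Δ, then [Γ₁, Γ₂] is a normal subset of Δ contained in Γ₁ ∩ Γ₂. In particular, if Γ is a closed subset of Δ, then for every k ≥ 1 the set γ_k(Γ) is a normal subset of Γ. -/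
open scoped Classical

/-- `Γ` is a normal subset of the relation `Δ`. -/
def IsNormalRel {Λ : Type*} (Δ Γ : Set (Λ × Λ)) : Prop :=
  Γ ⊆ Δ ∧ (∀ i j k : Λ, (i, j) ∈ Γ → (j, k) ∈ Δ → (i, k) ∈ Δ → (i, k) ∈ Γ)
    ∧ (∀ i j k : Λ, (i, j) ∈ Γ → (k, i) ∈ Δ → (k, j) ∈ Δ → (k, j) ∈ Γ)

/-- The bracket `[Γ₁, Γ₂]` of two subsets of `Δ`: all `(i,k) ∈ Δ` such that there is `j` with
`(i,j) ∈ Γ₁` and `(j,k) ∈ Γ₂`, or there is `j` with `(i,j) ∈ Γ₂` and `(j,k) ∈ Γ₁`. -/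
def bracketSet (Δ Γ₁ Γ₂ : Set (Λ × Λ)) : Set (Λ × Λ) :=
  {pk ∈ Δ | ∃ j : Λ, ((pk.1, j) ∈ Γ₁ ∧ (j, pk.2) ∈ Γ₂) ∨ ((pk.1, j) ∈ Γ₂ ∧ (j, pk.2) ∈ Γ₁)}

/-- `gammaSet Δ Γ n` is `γ_{n+1}(Γ)`: `γ_1(Γ) = Γ` and `γ_{k+1}(Γ) = [γ_k(Γ), Γ]`. -/
def gammaSet (Δ Γ : Set (Λ × Λ)) : ℕ → Set (Λ × Λ)
  | 0 => Γ
  | n + 1 => bracketSet Δ (gammaSet Δ Γ n) Γ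

lemma bracket_key {Λ : Type*} (Δ : Set (Λ × Λ))
    (hA2 : ∀ i j k l : Λ, (i, j) ∈ Δ → (j, k) ∈ Δ → (k, l) ∈ Δ → (i, l) ∈ Δ →
      ((i, k) ∈ Δ ↔ (j, l) ∈ Δ))
    (Γ₁ Γ₂ : Set (Λ × Λ)) (h1 : IsNormalRel Δ Γ₁) (h2 : IsNormalRel Δ Γ₂) :
    bracketSet Δ Γ₁ Γ₂ ⊆ Γ₁ ∩ Γ₂ ∧ IsNormalRel Δ (bracketSet Δ Γ₁ Γ₂) := by
  obtain ⟨hs1, hn1, hn1'⟩ := h1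
  obtain ⟨hs2, hn2, hn2'⟩ := h2
  have hsub : bracketSet Δ Γ₁ Γ₂ ⊆ Γ₁ ∩ Γ₂ := by
    rintro ⟨i, k⟩ ⟨hik, j, ⟨hij, hjk⟩ | ⟨hij, hjk⟩⟩
    · exact ⟨hn1 i j k hij (hs2 hjk) hik, hn2' j k i hjk (hs1 hij) hik⟩
    · exact ⟨hn1' j k i hjk (hs2 hij) hik, hn2 i j k hij (hs1 hjk) hik⟩
  refine ⟨hsub, Set.sep_subset _ _, ?_, ?_⟩
  · rintro i k l ⟨hik, j, ⟨hij, hjk⟩ | ⟨hij, hjk⟩⟩ hkl hil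
    · have hjl : (j, l) ∈ Δ :=
        (hA2 i j k l (hs1 hij) (hs2 hjk) hkl hil).mp hik
      exact ⟨hil, j, Or.inl ⟨hij, hn2 j k l hjk hkl hjl⟩⟩
    · have hjl : (j, l) ∈ Δ :=
        (hA2 i j k l (hs2 hij) (hs1 hjk) hkl hil).mp hik
      exact ⟨hil, j, Or.inr ⟨hij, hn1 j k l hjk hkl hjl⟩⟩
  · rintro i k l ⟨hik, j, ⟨hij, hjk⟩ | ⟨hij, hjk⟩⟩ hli hlk
    · have hlj : (l, j) ∈ Δ :=
        (hA2 l i j k hli (hs1 hij) (hs2 hjk) hlk).mpr hik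
      exact ⟨hlk, j, Or.inl ⟨hn1' i j l hij hli hlj, hjk⟩⟩
    · have hlj : (l, j) ∈ Δ :=
        (hA2 l i j k hli (hs2 hij) (hs1 hjk) hlk).mpr hik
      exact ⟨hlk, j, Or.inr ⟨hn2' i j l hij hli hlj, hjk⟩⟩

/-- If `Γ₁, Γ₂` are normal subsets of `Δ`, then `[Γ₁, Γ₂]` is a normal subset of `Δ`
contained in `Γ₁ ∩ Γ₂`. In particular, for a closed subset `Γ` of `Δ`, every `γ_k(Γ)`
(`k ≥ 1`) is a normal subset of `Γ` (recall `gammaSet Δ Γ n = γ_{n+1}(Γ)`). -/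
theorem bracketSet_normal_and_gammaSet_normal {Λ : Type*} (Δ : Set (Λ × Λ))
    (hA1 : ∀ i : Λ, (i, i) ∉ Δ)
    (hA2 : ∀ i j k l : Λ, (i, j) ∈ Δ → (j, k) ∈ Δ → (k, l) ∈ Δ → (i, l) ∈ Δ →
      ((i, k) ∈ Δ ↔ (j, l) ∈ Δ))
 :
    (∀ Γ₁ Γ₂ : Set (Λ × Λ), IsNormalRel Δ Γ₁ → IsNormalRel Δ Γ₂ →
      bracketSet Δ Γ₁ Γ₂ ⊆ Γ₁ ∩ Γ₂ ∧ IsNormalRel Δ (bracketSet Δ Γ₁ Γ₂)) ∧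
    (∀ Γ : Set (Λ × Λ), Γ ⊆ Δ →
      (∀ i j k : Λ, (i, j) ∈ Γ → (j, k) ∈ Γ → (i, k) ∈ Δ → (i, k) ∈ Γ) →
      ∀ n : ℕ, IsNormalRel Γ (gammaSet Δ Γ n)) := by
  refine ⟨fun Γ₁ Γ₂ h1 h2 => bracket_key Δ hA2 Γ₁ Γ₂ h1 h2, ?_⟩
  intro Γ hΓΔ hclosed n
  -- A2 holds for Γ
  have hA2Γ : ∀ i j k l : Λ, (i, j) ∈ Γ → (j, k) ∈ Γ → (k, l) ∈ Γ → (i, l) ∈ Γ →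
      ((i, k) ∈ Γ ↔ (j, l) ∈ Γ) := by
    intro i j k l hij hjk hkl hil
    constructor
    · intro hik
      exact hclosed j k l hjk hkl
        ((hA2 i j k l (hΓΔ hij) (hΓΔ hjk) (hΓΔ hkl) (hΓΔ hil)).mp (hΓΔ hik))
    · intro hjl
      exact hclosed i j k hij hjk
        ((hA2 i j k l (hΓΔ hij) (hΓΔ hjk) (hΓΔ hkl) (hΓΔ hil)).mpr (hΓΔ hjl))
  have hΓΓ : IsNormalRel Γ Γ :=
    ⟨le_refl Γ, fun _ _ _ _ _ h => h, fun _ _ _ _ _ h => h⟩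
  induction n with
  | zero => exact hΓΓ
  | succ n ih =>
    have heq : gammaSet Δ Γ (n + 1) = bracketSet Γ (gammaSet Δ Γ n) Γ := by
      ext ⟨i, k⟩
      constructor
      · rintro ⟨hik, j, ⟨hij, hjk⟩ | ⟨hij, hjk⟩⟩
        · exact ⟨hclosed i j k (ih.1 hij) hjk hik, j, Or.inl ⟨hij, hjk⟩⟩
        · exact ⟨hclosed i j k hij (ih.1 hjk) hik, j, Or.inr ⟨hij, hjk⟩⟩
      · rintro ⟨hik, hj⟩
        exact ⟨hΓΔ hik, hj⟩
    rw [show gammaSet Δ Γ (n + 1) = bracketSet Δ (gammaSet Δ Γ n) Γ from rfl] at heq ⊢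
    rw [heq]
    exact (bracket_key Γ hA2Γ _ Γ ih hΓΓ).2
end

section
/- If Γ is a normal subset of Δ, then the relation Δ \ Γ satisfies axioms (A1) and (A2). -/
open scoped Classical

/-- If `Γ` is a normal subset of `Δ`, then the relation `Δ \ Γ` satisfies (A1) and (A2). -/
theorem diff_normal_axioms {Λ : Type*} (Δ Γ : Set (Λ × Λ))
    (hA1 : ∀ i : Λ, (i, i) ∉ Δ)
    (hA2 : ∀ i j k l : Λ, (i, j) ∈ Δ → (j, k) ∈ Δ → (k, l) ∈ Δ → (i, l) ∈ Δ →
      ((i, k) ∈ Δ ↔ (j, l) ∈ Δ))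
    (hΓΔ : Γ ⊆ Δ)
    (hn1 : ∀ i j k : Λ, (i, j) ∈ Γ → (j, k) ∈ Δ → (i, k) ∈ Δ → (i, k) ∈ Γ)
    (hn2 : ∀ i j k : Λ, (i, j) ∈ Γ → (k, i) ∈ Δ → (k, j) ∈ Δ → (k, j) ∈ Γ) :
    (∀ i : Λ, (i, i) ∉ Δ \ Γ) ∧
    (∀ i j k l : Λ, (i, j) ∈ Δ \ Γ → (j, k) ∈ Δ \ Γ → (k, l) ∈ Δ \ Γ → (i, l) ∈ Δ \ Γ →
      ((i, k) ∈ Δ \ Γ ↔ (j, l) ∈ Δ \ Γ)) := by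
  constructor
  · intro i hi
    exact hA1 i hi.1
  · rintro i j k l ⟨hij, _⟩ ⟨hjk, _⟩ ⟨hkl, _⟩ ⟨hil, hilΓ⟩
    have hiff := hA2 i j k l hij hjk hkl hil
    constructor
    · rintro ⟨hik, _⟩
      refine ⟨hiff.mp hik, fun hjl => hilΓ (hn2 j l i hjl hij hil)⟩
    · rintro ⟨hjl, _⟩
      refine ⟨hiff.mpr hjl, fun hik => hilΓ (hn1 i k l hik hkl hil)⟩
end

section
/- For every k ≥ 1 and every closed subset Γ of Δ, the k-th term of the lower central series of H(Γ) equals H(γ_k(Γ)): γ_k(H(Γ)) = H(γ_k(Γ)). -/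
open scoped Classical
open scoped commutatorElement

/-- A set `Δ` of pairs satisfying axioms (A1) (irreflexivity) and (A2). -/
structure McLainData (Λ : Type*) where
  Δ : Set (Λ × Λ)
  axiomA1 : ∀ i : Λ, (i, i) ∉ Δ
  axiomA2 : ∀ i j k l : Λ, (i, j) ∈ Δ → (j, k) ∈ Δ → (k, l) ∈ Δ → (i, l) ∈ Δ →
    ((i, k) ∈ Δ ↔ (j, l) ∈ Δ)

variable {Λ : Type*}

/-- `Γ` is a closed subset of `Δ`. -/
def IsClosedIn {Λ : Type*} (D : McLainData Λ) (Γ : Set (Λ × Λ)) : Prop :=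
  Γ ⊆ D.Δ ∧ ∀ i j k : Λ, (i, j) ∈ Γ → (j, k) ∈ Γ → (i, k) ∈ D.Δ → (i, k) ∈ Γ

/-- Generators `y_{i,j}(a)`, `(i,j) ∈ Δ`, `a ∈ R`, of the presented group `H(Δ)`. -/
abbrev McGen (R : Type*) [Ring R] (D : McLainData Λ) : Type _ := {p : Λ × Λ // p ∈ D.Δ} × R

/-- The defining relations (rel1)-(rel3) of `H(Δ)`, as words in the free group on the
generators `y_{i,j}(a)`. -/
def McRels (R : Type*) [Ring R] (D : McLainData Λ) : Set (FreeGroup (McGen R D)) :=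
  {w | (∃ (p q r : {p : Λ × Λ // p ∈ D.Δ}) (a b : R),
          p.1.2 = q.1.1 ∧ (r : Λ × Λ) = (p.1.1, q.1.2) ∧
          w = ⁅FreeGroup.of ((p, a) : McGen R D), FreeGroup.of ((q, b) : McGen R D)⁆ *
            (FreeGroup.of ((r, a * b) : McGen R D))⁻¹) ∨
       (∃ (p q : {p : Λ × Λ // p ∈ D.Δ}) (a b : R),
          p.1.2 = q.1.1 ∧ (p.1.1, q.1.2) ∉ D.Δ ∧
          w = ⁅FreeGroup.of ((p, a) : McGen R D), FreeGroup.of ((q, b) : McGen R D)⁆) ∨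
       (∃ (p q : {p : Λ × Λ // p ∈ D.Δ}) (a b : R),
          p.1.2 ≠ q.1.1 ∧ p.1.1 ≠ q.1.2 ∧
          w = ⁅FreeGroup.of ((p, a) : McGen R D), FreeGroup.of ((q, b) : McGen R D)⁆) ∨
       (∃ (p : {p : Λ × Λ // p ∈ D.Δ}) (a b : R),
          w = FreeGroup.of ((p, a) : McGen R D) * FreeGroup.of ((p, b) : McGen R D) *
            (FreeGroup.of ((p, a + b) : McGen R D))⁻¹)}

/-- The abstract group `H(Δ)` generated by the `y_{i,j}(a)` subject to (rel1)-(rel3). -/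
abbrev HG (R : Type*) [Ring R] (D : McLainData Λ) : Type _ := PresentedGroup (McRels R D)

/-- For a subset `Γ` of `Δ`, the subgroup `H(Γ)` of `H(Δ)` generated by the `y_{i,j}(a)`
with `(i,j) ∈ Γ`. -/
def Hsub (R : Type*) [Ring R] (D : McLainData Λ) (Γ : Set (Λ × Λ)) : Subgroup (HG R D) :=
  Subgroup.closure
    {h | ∃ (p : {p : Λ × Λ // p ∈ D.Δ}) (a : R), (p : Λ × Λ) ∈ Γ ∧
      h = PresentedGroup.of ((p, a) : McGen R D)}

namespace McLainAux

variable {R : Type*} [Ring R] {D : McLainData Λ}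

lemma mk_rel_eq_one {w : FreeGroup (McGen R D)} (hw : w ∈ McRels R D) :
    PresentedGroup.mk (McRels R D) w = 1 :=
  (QuotientGroup.eq_one_iff w).mpr (Subgroup.subset_normalClosure hw)

lemma rel_add (p : {p : Λ × Λ // p ∈ D.Δ}) (a b : R) :
    (PresentedGroup.of (p, a) : HG R D) * PresentedGroup.of (p, b) =
      PresentedGroup.of (p, a + b) := by
  have h := mk_rel_eq_one (R := R) (D := D)
    (Or.inr (Or.inr (Or.inr ⟨p, a, b, rfl⟩)))
  simpa [PresentedGroup.of, map_mul, map_inv, mul_inv_eq_one] using h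

lemma rel_zero (p : {p : Λ × Λ // p ∈ D.Δ}) :
    (PresentedGroup.of (p, (0 : R)) : HG R D) = 1 := by
  have h := rel_add (R := R) (D := D) p 0 0
  rw [add_zero] at h
  exact mul_left_cancel (a := (PresentedGroup.of (p, (0 : R)) : HG R D)) (by rw [h, mul_one])

lemma rel_inv (p : {p : Λ × Λ // p ∈ D.Δ}) (a : R) :
    (PresentedGroup.of (p, a) : HG R D)⁻¹ = PresentedGroup.of (p, -a) := by
  have h : (PresentedGroup.of (p, a) : HG R D) * PresentedGroup.of (p, -a) = 1 := by
    rw [rel_add, add_neg_cancel, rel_zero]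
  exact (eq_inv_of_mul_eq_one_right h).symm

lemma rel_comm₁ {p q r : {p : Λ × Λ // p ∈ D.Δ}} (h : p.1.2 = q.1.1)
    (hr : (r : Λ × Λ) = (p.1.1, q.1.2)) (a b : R) :
    ⁅(PresentedGroup.of (p, a) : HG R D), (PresentedGroup.of (q, b) : HG R D)⁆ =
      PresentedGroup.of (r, a * b) := by
  have hh := mk_rel_eq_one (R := R) (D := D) (Or.inl ⟨p, q, r, a, b, h, hr, rfl⟩)
  simpa [PresentedGroup.of, commutatorElement_def, map_mul, map_inv,
    mul_inv_eq_one] using hh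

lemma rel_comm₂ {p q : {p : Λ × Λ // p ∈ D.Δ}} (h : p.1.2 = q.1.1)
    (h2 : (p.1.1, q.1.2) ∉ D.Δ) (a b : R) :
    ⁅(PresentedGroup.of (p, a) : HG R D), (PresentedGroup.of (q, b) : HG R D)⁆ = 1 := by
  have hh := mk_rel_eq_one (R := R) (D := D)
    (Or.inr (Or.inl ⟨p, q, a, b, h, h2, rfl⟩))
  simpa [PresentedGroup.of, commutatorElement_def, map_mul, map_inv] using hh

lemma rel_comm₃ {p q : {p : Λ × Λ // p ∈ D.Δ}} (h : p.1.2 ≠ q.1.1)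
    (h2 : p.1.1 ≠ q.1.2) (a b : R) :
    ⁅(PresentedGroup.of (p, a) : HG R D), (PresentedGroup.of (q, b) : HG R D)⁆ = 1 := by
  have hh := mk_rel_eq_one (R := R) (D := D)
    (Or.inr (Or.inr (Or.inl ⟨p, q, a, b, h, h2, rfl⟩)))
  simpa [PresentedGroup.of, commutatorElement_def, map_mul, map_inv] using hh

/-- `S` absorbs composition with `Γ` on the right and on the left. -/
def Absorbs (D : McLainData Λ) (Γ S : Set (Λ × Λ)) : Prop :=
  (∀ i j k : Λ, (i, j) ∈ S → (j, k) ∈ Γ → (i, k) ∈ D.Δ → (i, k) ∈ S) ∧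
  (∀ i j k : Λ, (i, j) ∈ Γ → (j, k) ∈ S → (i, k) ∈ D.Δ → (i, k) ∈ S)

lemma closed_absorbs {Γ : Set (Λ × Λ)} (hΓ : IsClosedIn D Γ) : Absorbs D Γ Γ :=
  ⟨hΓ.2, hΓ.2⟩

lemma bracket_subset {Γ S : Set (Λ × Λ)} (hΓ : IsClosedIn D Γ) (hSΓ : S ⊆ Γ) :
    bracketSet D.Δ S Γ ⊆ Γ := by
  rintro ⟨i, k⟩ ⟨hik, j, hj⟩
  rcases hj with ⟨h1, h2⟩ | ⟨h1, h2⟩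
  · exact hΓ.2 i j k (hSΓ h1) h2 hik
  · exact hΓ.2 i j k h1 (hSΓ h2) hik

lemma bracket_absorbs {Γ S : Set (Λ × Λ)} (hΓ : IsClosedIn D Γ) (hSΓ : S ⊆ Γ)
    (hS : Absorbs D Γ S) : Absorbs D Γ (bracketSet D.Δ S Γ) := by
  constructor
  · rintro i j k ⟨hij, m, hm⟩ hjk hik
    rcases hm with ⟨h1, h2⟩ | ⟨h1, h2⟩
    · -- (i,m) ∈ S, (m,j) ∈ Γ
      have hmk : (m, k) ∈ D.Δ :=
        (D.axiomA2 i m j k (hΓ.1 (hSΓ h1)) (hΓ.1 h2) (hΓ.1 hjk) hik).mp hij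
      exact ⟨hik, m, Or.inl ⟨h1, hΓ.2 m j k h2 hjk hmk⟩⟩
    · -- (i,m) ∈ Γ, (m,j) ∈ S
      have hmk : (m, k) ∈ D.Δ :=
        (D.axiomA2 i m j k (hΓ.1 h1) (hΓ.1 (hSΓ h2)) (hΓ.1 hjk) hik).mp hij
      exact ⟨hik, m, Or.inr ⟨h1, hS.1 m j k h2 hjk hmk⟩⟩
  · rintro i j k hij ⟨hjk, m, hm⟩ hik
    rcases hm with ⟨h1, h2⟩ | ⟨h1, h2⟩
    · -- (j,m) ∈ S, (m,k) ∈ Γ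
      have him : (i, m) ∈ D.Δ :=
        (D.axiomA2 i j m k (hΓ.1 hij) (hΓ.1 (hSΓ h1)) (hΓ.1 h2) hik).mpr hjk
      exact ⟨hik, m, Or.inl ⟨hS.2 i j m hij h1 him, h2⟩⟩
    · -- (j,m) ∈ Γ, (m,k) ∈ S
      have him : (i, m) ∈ D.Δ :=
        (D.axiomA2 i j m k (hΓ.1 hij) (hΓ.1 h1) (hΓ.1 (hSΓ h2)) hik).mpr hjk
      exact ⟨hik, m, Or.inr ⟨hΓ.2 i j m hij h1 him, h2⟩⟩

lemma gamma_subset_absorbs {Γ : Set (Λ × Λ)} (hΓ : IsClosedIn D Γ) (n : ℕ) :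
    gammaSet D.Δ Γ n ⊆ Γ ∧ Absorbs D Γ (gammaSet D.Δ Γ n) := by
  induction n with
  | zero => exact ⟨le_refl Γ, closed_absorbs hΓ⟩
  | succ n ih =>
    exact ⟨bracket_subset hΓ ih.1, bracket_absorbs hΓ ih.1 ih.2⟩

lemma Hsub_mono {Γ₁ Γ₂ : Set (Λ × Λ)} (h : Γ₁ ⊆ Γ₂) :
    Hsub R D Γ₁ ≤ Hsub R D Γ₂ := by
  apply Subgroup.closure_mono
  rintro x ⟨p, a, hp, rfl⟩
  exact ⟨p, a, h hp, rfl⟩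

lemma gen_mem {Γ : Set (Λ × Λ)} (p : {p : Λ × Λ // p ∈ D.Δ}) (a : R)
    (hp : (p : Λ × Λ) ∈ Γ) : (PresentedGroup.of (p, a) : HG R D) ∈ Hsub R D Γ :=
  Subgroup.subset_closure ⟨p, a, hp, rfl⟩

/-- Commutators of generators land in `Hsub T` provided `T` collects all composites. -/
lemma comm_gen_mem {A B T : Set (Λ × Λ)}
    (hAB : ∀ i j k : Λ, (i, j) ∈ A → (j, k) ∈ B → (i, k) ∈ D.Δ → (i, k) ∈ T)
    (hBA : ∀ i j k : Λ, (i, j) ∈ B → (j, k) ∈ A → (i, k) ∈ D.Δ → (i, k) ∈ T)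
    (p q : {p : Λ × Λ // p ∈ D.Δ}) (a b : R)
    (hp : (p : Λ × Λ) ∈ A) (hq : (q : Λ × Λ) ∈ B) :
    ⁅(PresentedGroup.of (p, a) : HG R D), (PresentedGroup.of (q, b) : HG R D)⁆ ∈ Hsub R D T := by
  by_cases h1 : p.1.2 = q.1.1
  · by_cases h2 : (p.1.1, q.1.2) ∈ D.Δ
    · rw [rel_comm₁ h1 (r := ⟨(p.1.1, q.1.2), h2⟩) rfl a b]
      refine gen_mem _ _ (hAB p.1.1 p.1.2 q.1.2 hp ?_ h2)
      rw [h1]; exact hq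
    · rw [rel_comm₂ h1 h2]; exact one_mem _
  · by_cases h2 : p.1.1 = q.1.2
    · rw [← commutatorElement_inv]
      refine inv_mem ?_
      by_cases h4 : (q.1.1, p.1.2) ∈ D.Δ
      · rw [rel_comm₁ h2.symm (r := ⟨(q.1.1, p.1.2), h4⟩) rfl b a]
        refine gen_mem _ _ (hBA q.1.1 q.1.2 p.1.2 hq ?_ h4)
        rw [← h2]; exact hp
      · rw [rel_comm₂ h2.symm h4]; exact one_mem _
    · rw [rel_comm₃ h1 h2]; exact one_mem _

/-- `Hsub Γ` normalizes `Hsub T` when `T` absorbs composition with `Γ`. -/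
lemma Hsub_le_normalizer {Γ T : Set (Λ × Λ)} (hT : Absorbs D Γ T) :
    Hsub R D Γ ≤ Subgroup.normalizer (Hsub R D T : Set (HG R D)) := by
  have conj_mem : ∀ (q : {p : Λ × Λ // p ∈ D.Δ}) (b : R), (q : Λ × Λ) ∈ Γ →
      ∀ x ∈ Hsub R D T,
        (PresentedGroup.of (q, b) : HG R D) * x * (PresentedGroup.of (q, b))⁻¹ ∈
          Hsub R D T := by
    intro q b hq x hx
    induction hx using Subgroup.closure_induction with
    | mem x hxg =>
      obtain ⟨t, a, ht, rfl⟩ := hxg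
      set g : HG R D := PresentedGroup.of (q, b)
      have key : g * PresentedGroup.of (t, a) * g⁻¹ =
          ⁅g, (PresentedGroup.of (t, a) : HG R D)⁆ * PresentedGroup.of (t, a) := by
        group
      rw [key]
      refine mul_mem ?_ (gen_mem t a ht)
      exact comm_gen_mem hT.2 hT.1 q t b a hq ht
    | one => simpa using one_mem (Hsub R D T)
    | mul x y hx hy ihx ihy =>
      have key : (PresentedGroup.of (q, b) : HG R D) * (x * y) *
            (PresentedGroup.of (q, b))⁻¹ =
          ((PresentedGroup.of (q, b) : HG R D) * x * (PresentedGroup.of (q, b))⁻¹) *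
            ((PresentedGroup.of (q, b) : HG R D) * y * (PresentedGroup.of (q, b))⁻¹) := by
        group
      rw [key]; exact mul_mem ihx ihy
    | inv x hx ihx =>
      have key : (PresentedGroup.of (q, b) : HG R D) * x⁻¹ *
            (PresentedGroup.of (q, b))⁻¹ =
          ((PresentedGroup.of (q, b) : HG R D) * x * (PresentedGroup.of (q, b))⁻¹)⁻¹ := by
        group
      rw [key]; exact inv_mem ihx
  rw [Hsub]
  apply Subgroup.closure_le _ |>.mpr
  rintro x ⟨q, b, hq, rfl⟩
  rw [SetLike.mem_coe, Subgroup.mem_normalizer_iff]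
  intro h
  constructor
  · intro hh
    exact conj_mem q b hq h hh
  · intro hh
    have h2 := conj_mem q (-b) hq _ hh
    have e : (PresentedGroup.of (q, -b) : HG R D) = (PresentedGroup.of (q, b))⁻¹ := by
      rw [← rel_inv]
    rw [e] at h2
    have key : (PresentedGroup.of (q, b) : HG R D)⁻¹ *
        (PresentedGroup.of (q, b) * h * (PresentedGroup.of (q, b))⁻¹) *
        ((PresentedGroup.of (q, b))⁻¹)⁻¹ = h := by group
    rwa [key] at h2

/-- The core computation: `⁅H(S), H(Γ)⁆ = H([S, Γ])` for `S ⊆ Γ` absorbing, `Γ` closed. -/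
lemma commutator_Hsub_eq {Γ S : Set (Λ × Λ)} (hΓ : IsClosedIn D Γ) (hSΓ : S ⊆ Γ)
    (hS : Absorbs D Γ S) :
    ⁅Hsub R D S, Hsub R D Γ⁆ = Hsub R D (bracketSet D.Δ S Γ) := by
  set Θ := bracketSet D.Δ S Γ with hΘdef
  have hΘΓ : Θ ⊆ Γ := bracket_subset hΓ hSΓ
  have hΘabs : Absorbs D Γ Θ := bracket_absorbs hΓ hSΓ hS
  have hnorm : Hsub R D Γ ≤ Subgroup.normalizer (Hsub R D Θ : Set (HG R D)) := Hsub_le_normalizer hΘabs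
  have hSle : Hsub R D S ≤ Hsub R D Γ := Hsub_mono hSΓ
  apply le_antisymm
  · rw [Subgroup.commutator_le]
    intro g hg h hh
    -- first fix g a generator, do induction on h
    have inner : ∀ (p : {p : Λ × Λ // p ∈ D.Δ}) (a : R), (p : Λ × Λ) ∈ S →
        ∀ h ∈ Hsub R D Γ,
          ⁅(PresentedGroup.of (p, a) : HG R D), h⁆ ∈ Hsub R D Θ := by
      intro p a hp h hh
      induction hh using Subgroup.closure_induction with
      | mem x hxg =>
        obtain ⟨q, b, hq, rfl⟩ := hxg
        refine comm_gen_mem ?_ ?_ p q a b hp hq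
        · intro i j k h1 h2 h3; exact ⟨h3, j, Or.inl ⟨h1, h2⟩⟩
        · intro i j k h1 h2 h3; exact ⟨h3, j, Or.inr ⟨h1, h2⟩⟩
      | one => simpa using one_mem (Hsub R D Θ)
      | mul x y hx hy ihx ihy =>
        have key : ⁅(PresentedGroup.of (p, a) : HG R D), x * y⁆ =
            ⁅(PresentedGroup.of (p, a) : HG R D), x⁆ *
              (x * ⁅(PresentedGroup.of (p, a) : HG R D), y⁆ * x⁻¹) := by
          group
        rw [key]
        refine mul_mem ihx ?_
        exact (Subgroup.mem_normalizer_iff.mp (hnorm hx) _).mp ihy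
      | inv x hx ihx =>
        have key : ⁅(PresentedGroup.of (p, a) : HG R D), x⁻¹⁆ =
            x⁻¹ * ⁅(PresentedGroup.of (p, a) : HG R D), x⁆⁻¹ * x := by
          group
        rw [key]
        have : (⁅(PresentedGroup.of (p, a) : HG R D), x⁆⁻¹ : HG R D) ∈ Hsub R D Θ :=
          inv_mem ihx
        have hxinv := inv_mem (hnorm hx)
        have := (Subgroup.mem_normalizer_iff.mp hxinv _).mp this
        simpa [mul_assoc] using this
    -- outer induction on g
    induction hg using Subgroup.closure_induction with
    | mem x hxg =>
      obtain ⟨p, a, hp, rfl⟩ := hxg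
      exact inner p a hp h hh
    | one => simpa using one_mem (Hsub R D Θ)
    | mul x y hx hy ihx ihy =>
      have key : ⁅x * y, h⁆ = (x * ⁅y, h⁆ * x⁻¹) * ⁅x, h⁆ := by group
      rw [key]
      refine mul_mem ?_ ihx
      exact (Subgroup.mem_normalizer_iff.mp (hnorm (hSle hx)) _).mp ihy
    | inv x hx ihx =>
      have key : ⁅x⁻¹, h⁆ = x⁻¹ * ⁅x, h⁆⁻¹ * x := by group
      rw [key]
      have h1 : (⁅x, h⁆⁻¹ : HG R D) ∈ Hsub R D Θ := inv_mem ihx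
      have hxinv := inv_mem (hnorm (hSle hx))
      have := (Subgroup.mem_normalizer_iff.mp hxinv _).mp h1
      simpa [mul_assoc] using this
  · rw [Hsub]
    apply Subgroup.closure_le _ |>.mpr
    rintro x ⟨t, a, ht, rfl⟩
    obtain ⟨htΔ, j, hj⟩ := ht
    rcases hj with ⟨h1, h2⟩ | ⟨h1, h2⟩
    · -- ((t:Λ×Λ).1, j) ∈ S, (j, (t:Λ×Λ).2) ∈ Γ
      set p : {p : Λ × Λ // p ∈ D.Δ} := ⟨((t : Λ × Λ).1, j), hΓ.1 (hSΓ h1)⟩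
      set q : {p : Λ × Λ // p ∈ D.Δ} := ⟨(j, (t : Λ × Λ).2), hΓ.1 h2⟩
      have key : (PresentedGroup.of (t, a) : HG R D) =
          ⁅(PresentedGroup.of (p, a) : HG R D), (PresentedGroup.of (q, (1 : R)) : HG R D)⁆ := by
        rw [rel_comm₁ (p := p) (q := q) rfl rfl a 1, mul_one]
      rw [key]
      exact Subgroup.commutator_mem_commutator (gen_mem p a h1) (gen_mem q 1 h2)
    · -- ((t:Λ×Λ).1, j) ∈ Γ, (j, (t:Λ×Λ).2) ∈ S
      set p : {p : Λ × Λ // p ∈ D.Δ} := ⟨((t : Λ × Λ).1, j), hΓ.1 h1⟩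
      set q : {p : Λ × Λ // p ∈ D.Δ} := ⟨(j, (t : Λ × Λ).2), hΓ.1 (hSΓ h2)⟩
      have key : (PresentedGroup.of (t, a) : HG R D) =
          ⁅(PresentedGroup.of (p, (1 : R)) : HG R D), (PresentedGroup.of (q, a) : HG R D)⁆ := by
        rw [rel_comm₁ (p := p) (q := q) rfl rfl 1 a, one_mul]
      rw [key, ← commutatorElement_inv]
      exact inv_mem
        (Subgroup.commutator_mem_commutator (gen_mem q a h2) (gen_mem p 1 h1))

end McLainAux

/-- For every `k ≥ 1` and every closed subset `Γ` of `Δ`, the `k`-th term of the lower central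
series of `H(Γ)` equals `H(γ_k(Γ))` (with `lowerCentralSeries _ n = γ_{n+1}` and
`gammaSet D.Δ Γ n = γ_{n+1}(Γ)`). -/
theorem hGroup_lowerCentralSeries (R : Type*) [Ring R] [Nontrivial R] {Λ : Type*}
    (D : McLainData Λ) (Γ : Set (Λ × Λ)) (hΓ : IsClosedIn D Γ) (n : ℕ) :
    ((⊤ : Subgroup (Hsub R D Γ)).lowerCentralSeries n).map (Hsub R D Γ).subtype =
      Hsub R D (gammaSet D.Δ Γ n) := by
  induction n with
  | zero =>
    rw [Subgroup.lowerCentralSeries_zero, ← MonoidHom.range_eq_map, Subgroup.range_subtype]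
    rfl
  | succ n ih =>
    have hmaptop : ((⊤ : Subgroup (Hsub R D Γ)).map (Hsub R D Γ).subtype) = Hsub R D Γ := by
      rw [← MonoidHom.range_eq_map, Subgroup.range_subtype]
    have step : (⊤ : Subgroup (Hsub R D Γ)).lowerCentralSeries (n + 1) =
        ⁅(⊤ : Subgroup (Hsub R D Γ)).lowerCentralSeries n, (⊤ : Subgroup (Hsub R D Γ))⁆ := rfl
    rw [step, Subgroup.map_commutator, ih, hmaptop]
    have hprops := McLainAux.gamma_subset_absorbs (D := D) hΓ n
    exact McLainAux.commutator_Hsub_eq hΓ hprops.1 hprops.2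
end

section
/- Given any n ∈ ℕ and h_1, …, h_n ∈ H(Δ), there is a finite closed subset Γ of Δ such that h_1, …, h_n ∈ H(Γ) and H(Γ) is nilpotent. In particular, the group H(Δ) is locally nilpotent. -/
open scoped Classical
open scoped commutatorElement

variable {Λ : Type*}

/-! ### Auxiliary combinatorics: complete chains -/

/-- A complete chain of length `m` from `i` to `k` in `Γ`. -/
def CChain (Γ : Set (Λ × Λ)) (i k : Λ) (m : ℕ) : Prop :=
  ∃ f : ℕ → Λ, f 0 = i ∧ f m = k ∧ ∀ s t : ℕ, s < t → t ≤ m → (f s, f t) ∈ Γ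

/-- Weight filtration of `Γ`: pairs joined by a complete chain of length at least `n`. -/
def Wt (Γ : Set (Λ × Λ)) (n : ℕ) : Set (Λ × Λ) :=
  {p | p ∈ Γ ∧ ∃ m, n ≤ m ∧ CChain Γ p.1 p.2 m}

lemma Wt_subset (Γ : Set (Λ × Λ)) (n : ℕ) : Wt Γ n ⊆ Γ := fun _ hp => hp.1

lemma Wt_antitone (Γ : Set (Λ × Λ)) {n n' : ℕ} (h : n ≤ n') : Wt Γ n' ⊆ Wt Γ n :=
  fun p hp => ⟨hp.1, hp.2.imp fun m hm => ⟨le_trans h hm.1, hm.2⟩⟩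

lemma Wt_one (Γ : Set (Λ × Λ)) : Wt Γ 1 = Γ := by
  ext p
  refine ⟨fun h => h.1, fun hp => ⟨hp, 1, le_rfl, fun s => if s = 0 then p.1 else p.2, ?_, ?_, ?_⟩⟩
  · simp
  · simp
  · intro s t hst ht1
    have hs : s = 0 := by omega
    have ht : t = 1 := by omega
    subst hs; subst ht
    simpa using hp

lemma cchain_trans (D : McLainData Λ) {Γ : Set (Λ × Λ)} (hC : IsClosedIn D Γ)
    {i j k : Λ} {m n : ℕ} (hm : 1 ≤ m) (hn : 1 ≤ n)
    (h1 : CChain Γ i j m) (h2 : CChain Γ j k n) (hik : (i, k) ∈ Γ) :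
    CChain Γ i k (m + n) := by
  obtain ⟨f, hf0, hfm, hf⟩ := h1
  obtain ⟨g, hg0, hgn, hg⟩ := h2
  have hij : (i, j) ∈ Γ := by rw [← hf0, ← hfm]; exact hf 0 m hm le_rfl
  have hjk : (j, k) ∈ Γ := by rw [← hg0, ← hgn]; exact hg 0 n hn le_rfl
  have hb : ∀ t, 1 ≤ t → t ≤ n → (i, g t) ∈ Γ := by
    intro t ht1 htn
    rcases eq_or_lt_of_le htn with h | htn'
    · subst h; rw [hgn]; exact hik
    · have hjgt : (j, g t) ∈ Γ := by rw [← hg0]; exact hg 0 t ht1 htn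
      have hgtk : (g t, k) ∈ Γ := by rw [← hgn]; exact hg t n htn' le_rfl
      have hD := D.axiomA2 i j (g t) k (hC.1 hij) (hC.1 hjgt) (hC.1 hgtk) (hC.1 hik)
      exact hC.2 i j (g t) hij hjgt (hD.mpr (hC.1 hjk))
  have hcross : ∀ s t, s ≤ m → 1 ≤ t → t ≤ n → (f s, g t) ∈ Γ := by
    intro s t hsm ht1 htn
    rcases Nat.eq_zero_or_pos s with h | hs1
    · subst h; rw [hf0]; exact hb t ht1 htn
    rcases eq_or_lt_of_le hsm with h | hsm'
    · subst h; rw [hfm, ← hg0]; exact hg 0 t ht1 htn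
    · have hifs : (i, f s) ∈ Γ := by rw [← hf0]; exact hf 0 s hs1 hsm
      have hfsj : (f s, j) ∈ Γ := by rw [← hfm]; exact hf s m hsm' le_rfl
      have hjgt : (j, g t) ∈ Γ := by rw [← hg0]; exact hg 0 t ht1 htn
      have hD := D.axiomA2 i (f s) j (g t) (hC.1 hifs) (hC.1 hfsj) (hC.1 hjgt)
        (hC.1 (hb t ht1 htn))
      exact hC.2 (f s) j (g t) hfsj hjgt (hD.mp (hC.1 hij))
  refine ⟨fun s => if s ≤ m then f s else g (s - m), by simp [hf0], ?_, ?_⟩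
  · have hmn : ¬ (m + n ≤ m) := by omega
    simp only [hmn, if_false]
    rw [Nat.add_sub_cancel_left]
    exact hgn
  · intro s t hst htmn
    by_cases hsm : s ≤ m
    · by_cases htm : t ≤ m
      · simpa [hsm, htm] using hf s t hst htm
      · simp only [hsm, if_true, if_neg htm]
        exact hcross s (t - m) hsm (by omega) (by omega)
    · have htm : ¬ t ≤ m := by omega
      simp only [if_neg hsm, if_neg htm]
      exact hg (s - m) (t - m) (by omega) (by omega)

lemma Wt_comp (D : McLainData Λ) {Γ : Set (Λ × Λ)} (hC : IsClosedIn D Γ)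
    {i j k : Λ} {m n : ℕ} (hm : 1 ≤ m) (hn : 1 ≤ n)
    (hp : (i, j) ∈ Wt Γ m) (hq : (j, k) ∈ Wt Γ n) (hik : (i, k) ∈ Γ) :
    (i, k) ∈ Wt Γ (m + n) := by
  obtain ⟨-, m', hm', hc1⟩ := hp
  obtain ⟨-, n', hn', hc2⟩ := hq
  exact ⟨hik, m' + n', add_le_add hm' hn',
    cchain_trans D hC (hm.trans hm') (hn.trans hn') hc1 hc2 hik⟩

lemma Wt_eventually_empty (D : McLainData Λ) {Γ : Set (Λ × Λ)} (hfin : Γ.Finite)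
    (hΔ : Γ ⊆ D.Δ) : ∃ N, 1 ≤ N ∧ Wt Γ N = ∅ := by
  have hV : (Prod.fst '' Γ ∪ Prod.snd '' Γ).Finite := (hfin.image _).union (hfin.image _)
  refine ⟨hV.toFinset.card + 2, by omega, ?_⟩
  ext p
  simp only [Set.mem_empty_iff_false, iff_false]
  rintro ⟨hpΓ, m, hNm, f, hf0, hfm, hf⟩
  have hm1 : 1 ≤ m := by omega
  have hinj : Set.InjOn (fun s : Fin (m + 1) => f s) Set.univ := by
    intro s _ t _ hst
    by_contra hne
    have hne' : (s : ℕ) ≠ (t : ℕ) := fun h => hne (Fin.ext h)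
    rcases lt_or_gt_of_ne hne' with h | h
    · have := hf s t h (by omega)
      rw [show f (t : ℕ) = f (s : ℕ) from hst.symm] at this
      exact D.axiomA1 _ (hΔ this)
    · have := hf t s h (by omega)
      rw [show f (s : ℕ) = f (t : ℕ) from hst] at this
      exact D.axiomA1 _ (hΔ this)
  have hmaps : ∀ s : Fin (m + 1), (fun s : Fin (m + 1) => f s) s ∈ hV.toFinset := by
    intro s
    rw [Set.Finite.mem_toFinset]
    rcases eq_or_lt_of_le (Nat.lt_succ_iff.mp s.2) with h | h
    · right
      exact ⟨(f 0, f m), hf 0 m hm1 le_rfl, by simp [h]⟩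
    · left
      exact ⟨(f s, f m), hf s m h le_rfl, rfl⟩
  have hcard := Finset.card_le_card_of_injOn (s := (Finset.univ : Finset (Fin (m + 1))))
    (t := hV.toFinset) (fun s : Fin (m + 1) => f s)
    (fun a _ => hmaps a) (by simpa using hinj)
  simp only [Finset.card_univ, Fintype.card_fin] at hcard
  omega

/-! ### Relations in the presented group -/

section GroupSide

variable (R : Type*) [Ring R] (D : McLainData Λ)

/-- Abbreviation for the generators of `H(Δ)`. -/
def ygen (p : {p : Λ × Λ // p ∈ D.Δ}) (a : R) : HG R D :=
  PresentedGroup.of ((p, a) : McGen R D)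

lemma mk_rel_eq_one {w : FreeGroup (McGen R D)} (hw : w ∈ McRels R D) :
    PresentedGroup.mk (McRels R D) w = 1 :=
  (QuotientGroup.eq_one_iff w).mpr (Subgroup.subset_normalClosure hw)

lemma y_rel1 (p q r : {p : Λ × Λ // p ∈ D.Δ}) (a b : R) (h : p.1.2 = q.1.1)
    (hr : (r : Λ × Λ) = (p.1.1, q.1.2)) :
    ⁅ygen R D p a, ygen R D q b⁆ = ygen R D r (a * b) := by
  have h1 := mk_rel_eq_one R D (Or.inl ⟨p, q, r, a, b, h, hr, rfl⟩)
  rw [map_mul, map_inv, map_commutatorElement, mul_inv_eq_one] at h1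
  exact h1

lemma y_rel1' (p q : {p : Λ × Λ // p ∈ D.Δ}) (a b : R) (h : p.1.2 = q.1.1)
    (hn : (p.1.1, q.1.2) ∉ D.Δ) :
    ⁅ygen R D p a, ygen R D q b⁆ = 1 := by
  have h1 := mk_rel_eq_one R D (Or.inr (Or.inl ⟨p, q, a, b, h, hn, rfl⟩))
  rwa [map_commutatorElement] at h1

lemma y_rel2 (p q : {p : Λ × Λ // p ∈ D.Δ}) (a b : R) (h1 : p.1.2 ≠ q.1.1)
    (h2 : p.1.1 ≠ q.1.2) :
    ⁅ygen R D p a, ygen R D q b⁆ = 1 := by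
  have h := mk_rel_eq_one R D (Or.inr (Or.inr (Or.inl ⟨p, q, a, b, h1, h2, rfl⟩)))
  rwa [map_commutatorElement] at h

lemma y_rel3 (p : {p : Λ × Λ // p ∈ D.Δ}) (a b : R) :
    ygen R D p a * ygen R D p b = ygen R D p (a + b) := by
  have h := mk_rel_eq_one R D (Or.inr (Or.inr (Or.inr ⟨p, a, b, rfl⟩)))
  rw [map_mul, map_mul, map_inv, mul_inv_eq_one] at h
  exact h

lemma y_zero (p : {p : Λ × Λ // p ∈ D.Δ}) : ygen R D p (0 : R) = 1 := by
  have h := y_rel3 R D p (0 : R) 0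
  rw [add_zero] at h
  exact mul_eq_left.mp h

lemma y_inv (p : {p : Λ × Λ // p ∈ D.Δ}) (a : R) :
    (ygen R D p a)⁻¹ = ygen R D p (-a) := by
  symm
  apply eq_inv_of_mul_eq_one_left
  rw [y_rel3, neg_add_cancel, y_zero]

/-- The generators of weight at least `n`. -/
def Sgen (Γ : Set (Λ × Λ)) (n : ℕ) : Set (HG R D) :=
  {h | ∃ (p : {p : Λ × Λ // p ∈ D.Δ}) (a : R), (p : Λ × Λ) ∈ Wt Γ n ∧ h = ygen R D p a}

lemma Sgen_antitone (Γ : Set (Λ × Λ)) {n n' : ℕ} (h : n ≤ n') :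
    Sgen R D Γ n' ⊆ Sgen R D Γ n := by
  rintro x ⟨p, a, hp, rfl⟩
  exact ⟨p, a, Wt_antitone Γ h hp, rfl⟩

lemma Sgen_one (Γ : Set (Λ × Λ)) :
    Sgen R D Γ 1 = {h | ∃ (p : {p : Λ × Λ // p ∈ D.Δ}) (a : R), (p : Λ × Λ) ∈ Γ ∧
      h = PresentedGroup.of ((p, a) : McGen R D)} := by
  unfold Sgen ygen
  rw [Wt_one]

lemma Hsub_eq_closure_Sgen_one (Γ : Set (Λ × Λ)) :
    Hsub R D Γ = Subgroup.closure (Sgen R D Γ 1) := by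
  rw [Sgen_one]; rfl

lemma comm_gen_mem {Γ : Set (Λ × Λ)} (hC : IsClosedIn D Γ) {m n : ℕ}
    (hm : 1 ≤ m) (hn : 1 ≤ n) {p q : {p : Λ × Λ // p ∈ D.Δ}} {a b : R}
    (hp : (p : Λ × Λ) ∈ Wt Γ m) (hq : (q : Λ × Λ) ∈ Wt Γ n) :
    ⁅ygen R D p a, ygen R D q b⁆ ∈ Subgroup.closure (Sgen R D Γ (m + n)) := by
  obtain ⟨⟨i, j⟩, hpΔ⟩ := p
  obtain ⟨⟨k, l⟩, hqΔ⟩ := q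
  by_cases hjk : j = k
  · subst hjk
    by_cases hil : (i, l) ∈ D.Δ
    · rw [y_rel1 R D _ _ ⟨(i, l), hil⟩ a b rfl rfl]
      have hilΓ : (i, l) ∈ Γ := hC.2 i j l (Wt_subset _ _ hp) (Wt_subset _ _ hq) hil
      exact Subgroup.subset_closure ⟨⟨(i, l), hil⟩, a * b, Wt_comp D hC hm hn hp hq hilΓ, rfl⟩
    · rw [y_rel1' R D _ _ a b rfl hil]
      exact one_mem _
  · by_cases hil : i = l
    · subst hil
      rw [← commutatorElement_inv]
      apply inv_mem
      by_cases hkj : (k, j) ∈ D.Δ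
      · rw [y_rel1 R D _ _ ⟨(k, j), hkj⟩ b a rfl rfl]
        have hkjΓ : (k, j) ∈ Γ := hC.2 k i j (Wt_subset _ _ hq) (Wt_subset _ _ hp) hkj
        have := Wt_comp D hC hn hm hq hp hkjΓ
        rw [Nat.add_comm n m] at this
        exact Subgroup.subset_closure ⟨⟨(k, j), hkj⟩, b * a, this, rfl⟩
      · rw [y_rel1' R D _ _ b a rfl hkj]
        exact one_mem _
    · rw [y_rel2 R D _ _ a b hjk hil]
      exact one_mem _

/-! ### The central filtration of `Hsub` -/

/-- The filtration subgroups of `Hsub R D Γ`. -/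
def Ghat (Γ : Set (Λ × Λ)) (n : ℕ) : Subgroup (Hsub R D Γ) :=
  Subgroup.closure ((((↑) : (Hsub R D Γ) → HG R D)) ⁻¹' (Sgen R D Γ n))

lemma Sgen_subset_Hsub (Γ : Set (Λ × Λ)) (n : ℕ) :
    Sgen R D Γ n ⊆ (Hsub R D Γ : Set (HG R D)) := by
  rintro x ⟨p, a, hp, rfl⟩
  rw [Hsub_eq_closure_Sgen_one]
  exact Subgroup.subset_closure ⟨p, a, by rw [Wt_one]; exact Wt_subset Γ n hp, rfl⟩

lemma map_Ghat (Γ : Set (Λ × Λ)) (n : ℕ) :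
    (Ghat R D Γ n).map (Hsub R D Γ).subtype = Subgroup.closure (Sgen R D Γ n) := by
  rw [Ghat, MonoidHom.map_closure]
  congr 1
  rw [Subgroup.coe_subtype]
  exact Set.image_preimage_eq_of_subset
    (by rw [Subtype.range_coe]; exact Sgen_subset_Hsub R D Γ n)

lemma mem_Ghat_of_coe {Γ : Set (Λ × Λ)} {n : ℕ} {x : (Hsub R D Γ)}
    (hx : (x : HG R D) ∈ Subgroup.closure (Sgen R D Γ n)) : x ∈ Ghat R D Γ n := by
  rw [← map_Ghat] at hx
  obtain ⟨y, hy, hxy⟩ := hx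
  have : y = x := Subtype.ext hxy
  exact this ▸ hy

lemma Ghat_one_eq_top (Γ : Set (Λ × Λ)) : Ghat R D Γ 1 = ⊤ := by
  rw [Ghat, Sgen_one]
  exact Subgroup.closure_closure_coe_preimage

lemma Ghat_antitone (Γ : Set (Λ × Λ)) {n n' : ℕ} (h : n ≤ n') :
    Ghat R D Γ n' ≤ Ghat R D Γ n :=
  Subgroup.closure_mono (Set.preimage_mono (Sgen_antitone R D Γ h))

lemma conj_gen_mem {Γ : Set (Λ × Λ)} (hC : IsClosedIn D Γ) {n : ℕ} (hn : 1 ≤ n)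
    (g : (Hsub R D Γ)) (hg : (g : HG R D) ∈ Sgen R D Γ 1) :
    ∀ x ∈ Ghat R D Γ n, g * x * g⁻¹ ∈ Ghat R D Γ n := by
  intro x hx
  induction hx using Subgroup.closure_induction with
  | mem x hxS =>
      have hcomm : ⁅g, x⁆ ∈ Ghat R D Γ n := by
        apply Ghat_antitone R D Γ (show n ≤ 1 + n by omega)
        apply mem_Ghat_of_coe
        obtain ⟨q, b, hq, hgq⟩ := hg
        obtain ⟨p, a, hp, hxp⟩ := hxS
        have : ((⁅g, x⁆ : (Hsub R D Γ)) : HG R D) = ⁅(g : HG R D), (x : HG R D)⁆ := rfl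
        rw [this, hgq, hxp]
        exact comm_gen_mem R D hC le_rfl hn hq hp
      have hx' : x ∈ Ghat R D Γ n := Subgroup.subset_closure hxS
      have : g * x * g⁻¹ = ⁅g, x⁆ * x := by group
      rw [this]
      exact mul_mem hcomm hx'
  | one => simpa using one_mem _
  | mul a b _ _ ha hb =>
      have : g * (a * b) * g⁻¹ = (g * a * g⁻¹) * (g * b * g⁻¹) := by group
      rw [this]
      exact mul_mem ha hb
  | inv a _ ha =>
      have : g * a⁻¹ * g⁻¹ = (g * a * g⁻¹)⁻¹ := by group
      rw [this]
      exact inv_mem ha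

lemma Sgen_inv_mem {Γ : Set (Λ × Λ)} {n : ℕ} {h : HG R D} (hh : h ∈ Sgen R D Γ n) :
    h⁻¹ ∈ Sgen R D Γ n := by
  obtain ⟨p, a, hp, rfl⟩ := hh
  exact ⟨p, -a, hp, y_inv R D p a⟩

lemma Ghat_normal {Γ : Set (Λ × Λ)} (hC : IsClosedIn D Γ) {n : ℕ} (hn : 1 ≤ n) :
    (Ghat R D Γ n).Normal := by
  constructor
  intro x hx g
  have hg : g ∈ Ghat R D Γ 1 := by rw [Ghat_one_eq_top]; trivial
  rw [Ghat] at hg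
  revert x hx
  have main : ∀ g : (Hsub R D Γ), g ∈ Subgroup.closure
      ((((↑) : (Hsub R D Γ) → HG R D)) ⁻¹' (Sgen R D Γ 1)) →
      (∀ x ∈ Ghat R D Γ n, g * x * g⁻¹ ∈ Ghat R D Γ n) ∧
      (∀ x ∈ Ghat R D Γ n, g⁻¹ * x * g ∈ Ghat R D Γ n) := by
    intro g hg
    induction hg using Subgroup.closure_induction with
    | mem g hgS =>
        constructor
        · exact conj_gen_mem R D hC hn g hgS
        · have : ((g⁻¹ : (Hsub R D Γ)) : HG R D) ∈ Sgen R D Γ 1 := Sgen_inv_mem R D hgS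
          have h2 := conj_gen_mem R D hC hn g⁻¹ this
          simpa using h2
    | one => constructor <;> intro x hx <;> simpa using hx
    | mul a b _ _ ha hb =>
        constructor
        · intro x hx
          have : a * b * x * (a * b)⁻¹ = a * (b * x * b⁻¹) * a⁻¹ := by group
          rw [this]
          exact ha.1 _ (hb.1 x hx)
        · intro x hx
          have : (a * b)⁻¹ * x * (a * b) = b⁻¹ * (a⁻¹ * x * a) * b := by group
          rw [this]
          exact hb.2 _ (ha.2 x hx)
    | inv a _ ha =>
        constructor
        · intro x hx
          simpa using ha.2 x hx
        · intro x hx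
          simpa using ha.1 x hx
  intro x hx
  exact (main g hg).1 x hx

lemma Ghat_commutator_le {Γ : Set (Λ × Λ)} (hC : IsClosedIn D Γ) {m n : ℕ}
    (hm : 1 ≤ m) (hn : 1 ≤ n) :
    ⁅Ghat R D Γ m, Ghat R D Γ n⁆ ≤ Ghat R D Γ (m + n) := by
  haveI hN : (Ghat R D Γ (m + n)).Normal := Ghat_normal R D hC (by omega)
  rw [Subgroup.commutator_le]
  intro a ha b hb
  set π := QuotientGroup.mk' (Ghat R D Γ (m + n)) with hπ
  have hker : ∀ z : (Hsub R D Γ), π z = 1 ↔ z ∈ Ghat R D Γ (m + n) := fun z =>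
    QuotientGroup.eq_one_iff z
  have hcomm : ∀ g : (Hsub R D Γ), (g : HG R D) ∈ Sgen R D Γ m →
      ∀ g' : (Hsub R D Γ), (g' : HG R D) ∈ Sgen R D Γ n → Commute (π g) (π g') := by
    intro g hg g' hg'
    rw [← commutatorElement_eq_one_iff_commute, ← map_commutatorElement]
    rw [hker]
    apply mem_Ghat_of_coe
    obtain ⟨p, a', hp, hgp⟩ := hg
    obtain ⟨q, b', hq, hgq⟩ := hg'
    have : ((⁅g, g'⁆ : (Hsub R D Γ)) : HG R D) = ⁅(g : HG R D), (g' : HG R D)⁆ := rfl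
    rw [this, hgp, hgq]
    exact comm_gen_mem R D hC hm hn hp hq
  have e : ∀ t : ℕ, Ghat R D Γ t = Subgroup.closure ((((↑) : (Hsub R D Γ) → HG R D)) ⁻¹'
      (Sgen R D Γ t)) := fun _ => rfl
  have h1 : (Ghat R D Γ m).map π ≤ Subgroup.centralizer ((Ghat R D Γ n).map π) := by
    rw [e m, e n, MonoidHom.map_closure, MonoidHom.map_closure, Subgroup.closure_le]
    rintro _ ⟨g, hg, rfl⟩
    rw [SetLike.mem_coe, Subgroup.mem_centralizer_iff]
    intro y hy
    have hy' : y ∈ Subgroup.closure (π '' ((((↑) : (Hsub R D Γ) → HG R D)) ⁻¹'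
        (Sgen R D Γ n))) := hy
    have hle : Subgroup.closure (π '' ((((↑) : (Hsub R D Γ) → HG R D)) ⁻¹'
        (Sgen R D Γ n))) ≤ Subgroup.centralizer {π g} := by
      rw [Subgroup.closure_le]
      rintro _ ⟨g', hg', rfl⟩
      rw [SetLike.mem_coe, Subgroup.mem_centralizer_iff]
      rintro z hz
      rw [Set.mem_singleton_iff] at hz
      subst hz
      exact (hcomm g hg g' hg')
    have := hle hy'
    rw [Subgroup.mem_centralizer_iff] at this
    exact (this (π g) rfl).symm
  have hπa : π a ∈ (Ghat R D Γ m).map π := ⟨a, ha, rfl⟩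
  have hπb : π b ∈ (Ghat R D Γ n).map π := ⟨b, hb, rfl⟩
  have hab : Commute (π a) (π b) := by
    have := Subgroup.mem_centralizer_iff.mp (h1 hπa)
    exact (this (π b) hπb).symm
  rw [← hker]
  rw [map_commutatorElement]
  exact commutatorElement_eq_one_iff_commute.mpr hab

lemma Hsub_nilpotent {Γ : Set (Λ × Λ)} (hfin : Γ.Finite) (hC : IsClosedIn D Γ) :
    Group.IsNilpotent (Hsub R D Γ) := by
  obtain ⟨N, hN1, hNe⟩ := Wt_eventually_empty D hfin hC.1
  rw [nilpotent_iff_lowerCentralSeries]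
  refine ⟨N, ?_⟩
  have key : ∀ t, Subgroup.lowerCentralSeries (⊤ : Subgroup (Hsub R D Γ)) t ≤ Ghat R D Γ (t + 1) := by
    intro t
    induction t with
    | zero => rw [Ghat_one_eq_top]; exact le_top
    | succ t ih =>
        rw [Subgroup.lowerCentralSeries_succ]
        have h2 : ⁅Subgroup.lowerCentralSeries (⊤ : Subgroup (Hsub R D Γ)) t, (⊤ : Subgroup (Hsub R D Γ))⁆ ≤
            ⁅Ghat R D Γ (t + 1), Ghat R D Γ 1⁆ :=
          Subgroup.commutator_mono ih (by rw [Ghat_one_eq_top])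
        exact h2.trans (Ghat_commutator_le R D hC (by omega) le_rfl)
  have hbot : Ghat R D Γ N = ⊥ := by
    have hS : Sgen R D Γ N = ∅ := by
      ext h
      simp only [Sgen, Set.mem_setOf_eq, Set.mem_empty_iff_false, iff_false]
      rintro ⟨p, a, hp, rfl⟩
      rw [hNe] at hp
      exact hp
    have hG : Ghat R D Γ N = Subgroup.closure ((((↑) : (Hsub R D Γ) → HG R D)) ⁻¹'
        (Sgen R D Γ N)) := rfl
    rw [hG, hS, Set.preimage_empty, Subgroup.closure_empty]
  have := (key N).trans (Ghat_antitone R D Γ (by omega : N ≤ N + 1))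
  rw [hbot] at this
  exact le_bot_iff.mp this

lemma Hsub_mono {Γ Γ' : Set (Λ × Λ)} (h : Γ ⊆ Γ') : Hsub R D Γ ≤ Hsub R D Γ' := by
  apply Subgroup.closure_mono
  rintro x ⟨p, a, hp, rfl⟩
  exact ⟨p, a, h hp, rfl⟩

lemma exists_finite_carrier (x : HG R D) :
    ∃ P : Set (Λ × Λ), P.Finite ∧ P ⊆ D.Δ ∧ x ∈ Hsub R D P := by
  have hx : x ∈ Subgroup.closure (Set.range (PresentedGroup.of : McGen R D → HG R D)) := by
    rw [PresentedGroup.closure_range_of]; trivial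
  induction hx using Subgroup.closure_induction with
  | mem x hxr =>
      obtain ⟨⟨p, a⟩, rfl⟩ := hxr
      refine ⟨{(p : Λ × Λ)}, Set.finite_singleton _, by simpa using p.2, ?_⟩
      exact Subgroup.subset_closure ⟨p, a, rfl, rfl⟩
  | one => exact ⟨∅, Set.finite_empty, Set.empty_subset _, one_mem _⟩
  | mul a b _ _ ha hb =>
      obtain ⟨P1, h1f, h1Δ, h1⟩ := ha
      obtain ⟨P2, h2f, h2Δ, h2⟩ := hb
      exact ⟨P1 ∪ P2, h1f.union h2f, Set.union_subset h1Δ h2Δ,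
        mul_mem (Hsub_mono R D Set.subset_union_left h1)
          (Hsub_mono R D Set.subset_union_right h2)⟩
  | inv a _ ha =>
      obtain ⟨P, hf, hΔ, h⟩ := ha
      exact ⟨P, hf, hΔ, inv_mem h⟩

end GroupSide

/-- Given any `n ∈ ℕ` and `h₁, …, hₙ ∈ H(Δ)`, there is a finite closed subset `Γ` of `Δ` such
that `h₁, …, hₙ ∈ H(Γ)` and `H(Γ)` is nilpotent. In particular, `H(Δ)` is locally nilpotent. -/
theorem hGroup_locally_nilpotent (R : Type*) [Ring R] [Nontrivial R] {Λ : Type*}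
    (D : McLainData Λ) :
    (∀ (n : ℕ) (h : Fin n → HG R D), ∃ Γ : Set (Λ × Λ), Γ.Finite ∧ IsClosedIn D Γ ∧
      (∀ m : Fin n, h m ∈ Hsub R D Γ) ∧ Group.IsNilpotent (Hsub R D Γ)) ∧
    (∀ S : Set (HG R D), S.Finite → Group.IsNilpotent (Subgroup.closure S)) := by
  have main : ∀ (n : ℕ) (h : Fin n → HG R D), ∃ Γ : Set (Λ × Λ), Γ.Finite ∧ IsClosedIn D Γ ∧
      (∀ m : Fin n, h m ∈ Hsub R D Γ) ∧ Group.IsNilpotent (Hsub R D Γ) := by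
    intro n h
    choose P hPfin hPΔ hPmem using fun m : Fin n => exists_finite_carrier R D (h m)
    set P0 : Set (Λ × Λ) := ⋃ m, P m with hP0
    have hP0fin : P0.Finite := Set.finite_iUnion hPfin
    have hP0Δ : P0 ⊆ D.Δ := Set.iUnion_subset hPΔ
    set V : Set Λ := Prod.fst '' P0 ∪ Prod.snd '' P0 with hV
    have hVfin : V.Finite := (hP0fin.image _).union (hP0fin.image _)
    refine ⟨(V ×ˢ V) ∩ D.Δ, ((hVfin.prod hVfin).inter_of_left _), ?_, ?_, ?_⟩
    · constructor
      · exact Set.inter_subset_right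
      · intro i j k h1 h2 h3
        exact ⟨⟨h1.1.1, h2.1.2⟩, h3⟩
    · intro m
      refine Hsub_mono R D ?_ (hPmem m)
      intro p hp
      have hp0 : p ∈ P0 := Set.mem_iUnion.mpr ⟨m, hp⟩
      refine ⟨⟨?_, ?_⟩, hPΔ m hp⟩
      · exact Set.mem_union_left _ ⟨p, hp0, rfl⟩
      · exact Set.mem_union_right _ ⟨p, hp0, rfl⟩
    · apply Hsub_nilpotent R D ((hVfin.prod hVfin).inter_of_left _)
      constructor
      · exact Set.inter_subset_right
      · intro i j k h1 h2 h3
        exact ⟨⟨h1.1.1, h2.1.2⟩, h3⟩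
  refine ⟨main, ?_⟩
  intro S hS
  obtain ⟨n, f, -, hrange⟩ := hS.fin_param
  obtain ⟨Γ, hfin, hC, hmem, hnil⟩ := main n f
  have hle : Subgroup.closure S ≤ Hsub R D Γ := by
    rw [Subgroup.closure_le]
    intro s hs
    rw [← hrange] at hs
    obtain ⟨m, rfl⟩ := hs
    exact hmem m
  haveI := hnil
  exact nilpotent_of_surjective (Subgroup.subgroupOfEquivOfLe hle).toMonoidHom
    (MulEquiv.surjective _)
end

section
/- Let G be a group with subgroups G_1, …, G_n such that G = G_1 ⋯ G_n with uniqueness of expression (every g ∈ G is uniquely a product g_1 ⋯ g_n with g_i ∈ G_i), and such that G_i ⋯ G_n is a normal subgroup of G for all 1 ≤ i ≤ n. Then for every permutation σ ∈ S_n, we have G = G_{σ(1)} ⋯ G_{σ(n)} with uniqueness of expression. -/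
open scoped Classical


set_option linter.unreachableTactic false
set_option linter.unusedTactic false

section aux
variable {M : Type*} [Monoid M]

lemma list_split_prod (l : List M) (p : ℕ) (hp : p < l.length) :
    l.prod = (l.take p).prod * l[p] * (l.drop (p+1)).prod := by
  conv_lhs => rw [← List.take_append_drop p l]
  rw [List.drop_eq_getElem_cons hp, List.prod_append, List.prod_cons, mul_assoc]

lemma prod_ofFn_split {n : ℕ} (f : Fin (n+1) → M) (p : Fin (n+1)) :
    (List.ofFn f).prod =
      ((List.ofFn fun j : Fin n => f (p.succAbove j)).take (p : ℕ)).prod * f p *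
      ((List.ofFn fun j : Fin n => f (p.succAbove j)).drop (p : ℕ)).prod := by
  have hp : (p : ℕ) < (List.ofFn f).length := by simp [p.isLt]
  rw [list_split_prod (List.ofFn f) p hp]
  have ht : (List.ofFn f).take (p:ℕ) = (List.ofFn fun j : Fin n => f (p.succAbove j)).take (p:ℕ) := by
    apply List.ext_getElem
    · simp; omega
    · intro i h1 h2
      simp only [List.getElem_take, List.getElem_ofFn]
      congr 1
      have hi : i < (p : ℕ) := by simp at h1; omega
      rw [Fin.succAbove_of_castSucc_lt]
      · ext; simp
      · simpa [Fin.lt_iff_val_lt_val] using hi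
  have hd : (List.ofFn f).drop ((p:ℕ)+1) = (List.ofFn fun j : Fin n => f (p.succAbove j)).drop (p:ℕ) := by
    apply List.ext_getElem
    · simp <;> omega
    · intro i h1 h2
      simp only [List.getElem_drop, List.getElem_ofFn]
      congr 1
      rw [Fin.succAbove_of_le_castSucc]
      · ext; simp; omega
      · simp [Fin.le_iff_val_le_val] <;> omega
  have hg : (List.ofFn f)[(p:ℕ)]'hp = f p := by
    rw [List.getElem_ofFn]
  rw [ht, hd, hg]

lemma prod_ofFn_castSucc {n : ℕ} (f : Fin (n+1) → M) :
    (List.ofFn f).prod = (List.ofFn fun i : Fin n => f i.castSucc).prod * f (Fin.last n) := by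
  rw [List.ofFn_succ', List.concat_eq_append, List.prod_append, List.prod_singleton]

lemma prod_ofFn_tail_ones {n : ℕ} (f : Fin (n+1) → M)
    (h : ∀ j : Fin (n+1), (j : ℕ) < n → f j = 1) :
    (List.ofFn f).prod = f (Fin.last n) := by
  rw [prod_ofFn_castSucc]
  have : (List.ofFn fun i : Fin n => f i.castSucc).prod = 1 := by
    apply List.prod_eq_one
    intro x hx
    rw [List.mem_ofFn] at hx
    obtain ⟨j, rfl⟩ := hx
    exact h _ (by simp)
  rw [this, one_mul]

lemma prod_ofFn_single {n : ℕ} (m : Fin n) (x : M) :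
    (List.ofFn (fun i => if i = m then x else 1)).prod = x := by
  cases n with
  | zero => exact m.elim0
  | succ n' =>
    rw [prod_ofFn_split _ m]
    have h1 : (List.ofFn fun j : Fin n' => if m.succAbove j = m then x else (1:M)) =
        List.replicate n' 1 := by
      rw [show (fun j : Fin n' => if m.succAbove j = m then x else (1:M)) = fun _ => 1 from
        funext fun j => if_neg (Fin.succAbove_ne m j)]
      simp [List.ofFn_const]
    rw [h1, List.take_replicate, List.drop_replicate, List.prod_replicate, List.prod_replicate,
      one_pow, one_pow, one_mul, mul_one, if_pos rfl]
end aux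

universe u

theorem key_perm : ∀ (n : ℕ), ∀ {G : Type u} [Group G] (Gs : Fin n → Subgroup G),
    (∀ g : G, ∃! f : Fin n → G, (∀ i : Fin n, f i ∈ Gs i) ∧ (List.ofFn f).prod = g) →
    (∀ i : Fin n, ∃ N : Subgroup G, N.Normal ∧
      (N : Set G) = {g : G | ∃ f : Fin n → G, (∀ j : Fin n, f j ∈ Gs j) ∧
        (∀ j : Fin n, (j : ℕ) < (i : ℕ) → f j = 1) ∧ (List.ofFn f).prod = g}) →
    ∀ σ : Equiv.Perm (Fin n), ∀ g : G,
      ∃! f : Fin n → G, (∀ i : Fin n, f i ∈ Gs (σ i)) ∧ (List.ofFn f).prod = g := by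
  intro n
  induction n with
  | zero =>
    intro G _ Gs huniq hnorm σ g
    obtain ⟨f0, ⟨-, hf0p⟩, -⟩ := huniq g
    simp only [List.ofFn_zero, List.prod_nil] at hf0p
    exact ⟨fun i => i.elim0, ⟨fun i => i.elim0, by simpa using hf0p⟩,
      fun y _ => funext fun i => i.elim0⟩
  | succ n IH =>
    intro G _ Gs huniq hnorm σ g
    classical
    -- Step A : the last subgroup is normal
    obtain ⟨L0, hL0norm, hL0car⟩ := hnorm (Fin.last n)
    have hL0 : L0 = Gs (Fin.last n) := by
      apply SetLike.ext'
      rw [hL0car]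
      ext x
      constructor
      · rintro ⟨f, hm, hz, hp⟩
        have := prod_ofFn_tail_ones f (by simpa using hz)
        rw [hp] at this
        rw [this]
        exact hm _
      · intro hx
        refine ⟨fun j => if j = Fin.last n then x else 1, ?_, ?_, ?_⟩
        · intro j
          dsimp only
          by_cases h : j = Fin.last n
          · rw [if_pos h, h]; exact hx
          · rw [if_neg h]; exact one_mem _
        · intro j hj
          dsimp only
          rw [if_neg]
          intro h
          rw [h] at hj
          simp at hj
        · exact prod_ofFn_single _ x
    have hLn : (Gs (Fin.last n)).Normal := hL0 ▸ hL0norm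
    -- Step B : quotient setup
    let π : G →* G ⧸ (Gs (Fin.last n)) := QuotientGroup.mk' (Gs (Fin.last n))
    have hπsurj : Function.Surjective π := QuotientGroup.mk'_surjective _
    have hker : ∀ y : G, π y = 1 ↔ y ∈ Gs (Fin.last n) := fun y => QuotientGroup.eq_one_iff y
    set Q := G ⧸ (Gs (Fin.last n)) with hQ
    let Gs' : Fin n → Subgroup Q := fun j => (Gs j.castSucc).map π
    have hπprod : ∀ (m : ℕ) (f : Fin m → G),
        π (List.ofFn f).prod = (List.ofFn fun j => π (f j)).prod := by
      intro m f
      rw [map_list_prod, List.map_ofFn]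
      rfl
    -- pushing a full factorization to the quotient
    have hπfull : ∀ f : Fin (n+1) → G, (∀ i, f i ∈ Gs i) →
        π (List.ofFn f).prod = (List.ofFn fun j : Fin n => π (f j.castSucc)).prod := by
      intro f hm
      rw [hπprod, prod_ofFn_castSucc (fun j => π (f j)), (hker _).2 (hm (Fin.last n)), mul_one]
    -- Step C : unique factorization in the quotient
    have huniq' : ∀ q : Q, ∃! f' : Fin n → Q,
        (∀ i : Fin n, f' i ∈ Gs' i) ∧ (List.ofFn f').prod = q := by
      intro q
      have hexu : ∀ (f₁ f₂ : Fin n → Q), (∀ i, f₁ i ∈ Gs' i) → (List.ofFn f₁).prod = q →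
          (∀ i, f₂ i ∈ Gs' i) → (List.ofFn f₂).prod = q → f₁ = f₂ := by
        intro f₁ f₂ hm₁ hp₁ hm₂ hp₂
        have h₁ : ∀ j, ∃ y, y ∈ Gs j.castSucc ∧ π y = f₁ j := by
          intro j; simpa [Gs', Subgroup.mem_map] using hm₁ j
        have h₂ : ∀ j, ∃ y, y ∈ Gs j.castSucc ∧ π y = f₂ j := by
          intro j; simpa [Gs', Subgroup.mem_map] using hm₂ j
        choose a ha hπa using h₁
        choose b hb hπb using h₂
        have hπab : π (List.ofFn b).prod = π (List.ofFn a).prod := by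
          rw [hπprod, hπprod]
          have e1 : (fun j => π (a j)) = f₁ := funext hπa
          have e2 : (fun j => π (b j)) = f₂ := funext hπb
          rw [e1, e2, hp₁, hp₂]
        set z : G := (List.ofFn b).prod⁻¹ * (List.ofFn a).prod with hz
        have hzL : z ∈ Gs (Fin.last n) := by
          rw [← hker]
          simp [z, map_mul, map_inv, hπab]
        set A : Fin (n+1) → G := Fin.snoc a 1 with hA
        set B : Fin (n+1) → G := Fin.snoc b z with hB
        have hAm : ∀ i, A i ∈ Gs i := by
          intro i
          induction i using Fin.lastCases with
          | last => simpa [A] using one_mem _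
          | cast j => simpa [A] using ha j
        have hBm : ∀ i, B i ∈ Gs i := by
          intro i
          induction i using Fin.lastCases with
          | last => simpa [B] using hzL
          | cast j => simpa [B] using hb j
        have hprodA : (List.ofFn A).prod = (List.ofFn a).prod := by
          rw [prod_ofFn_castSucc]
          simp [A]
        have hprodB : (List.ofFn B).prod = (List.ofFn a).prod := by
          rw [prod_ofFn_castSucc]
          simp [B, hz]
        have hAB : A = B := by
          have h1 := (huniq ((List.ofFn a).prod)).unique ⟨hAm, hprodA⟩ ⟨hBm, hprodB⟩
          exact h1
        funext j
        have := congrFun hAB j.castSucc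
        rw [hA, hB, Fin.snoc_castSucc, Fin.snoc_castSucc] at this
        rw [← hπa j, ← hπb j, this]
      obtain ⟨g0, rfl⟩ := hπsurj q
      obtain ⟨f, ⟨hmem, hprod⟩, -⟩ := huniq g0
      refine ⟨fun j => π (f j.castSucc), ⟨fun j => ⟨f j.castSucc, hmem _, rfl⟩, ?_⟩, ?_⟩
      · rw [← hπfull f hmem, hprod]
      · intro f₂ ⟨hm₂, hp₂⟩
        exact hexu f₂ _ hm₂ hp₂ (fun j => ⟨f j.castSucc, hmem _, rfl⟩)
          (by rw [← hπfull f hmem, hprod])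
    -- Step D : tails are normal in the quotient
    have hnorm' : ∀ i : Fin n, ∃ N : Subgroup Q, N.Normal ∧
        (N : Set Q) = {q : Q | ∃ f' : Fin n → Q, (∀ j : Fin n, f' j ∈ Gs' j) ∧
          (∀ j : Fin n, (j : ℕ) < (i : ℕ) → f' j = 1) ∧ (List.ofFn f').prod = q} := by
      intro i
      obtain ⟨N, hNnorm, hNcar⟩ := hnorm i.castSucc
      refine ⟨N.map π, hNnorm.map π hπsurj, ?_⟩
      ext q
      simp only [Subgroup.coe_map, Set.mem_image, SetLike.mem_coe, Set.mem_setOf_eq]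
      constructor
      · rintro ⟨x, hx, rfl⟩
        have hx' : x ∈ (N : Set G) := hx
        rw [hNcar] at hx'
        obtain ⟨f, hm, hz, hp⟩ := hx'
        refine ⟨fun j => π (f j.castSucc), fun j => ⟨f j.castSucc, hm _, rfl⟩, ?_, ?_⟩
        · intro j hj
          dsimp only
          rw [hz j.castSucc (by simpa using hj)]
          exact map_one π
        · rw [← hπfull f hm, hp]
      · rintro ⟨f', hm', hz', hp'⟩
        have hlift : ∀ j, ∃ y, y ∈ Gs j.castSucc ∧ π y = f' j ∧ (f' j = 1 → y = 1) := by
          intro j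
          by_cases h1 : f' j = 1
          · exact ⟨1, one_mem _, by simp [h1], fun _ => rfl⟩
          · obtain ⟨y, hy, hπy⟩ : ∃ y, y ∈ Gs j.castSucc ∧ π y = f' j := by
              simpa [Gs', Subgroup.mem_map] using hm' j
            exact ⟨y, hy, hπy, fun h => absurd h h1⟩
        choose a ha hπa h1a using hlift
        set F : Fin (n+1) → G := Fin.snoc a 1 with hF
        have hFm : ∀ j, F j ∈ Gs j := by
          intro j
          induction j using Fin.lastCases with
          | last => simpa [F] using one_mem _
          | cast j => simpa [F] using ha j
        have hFz : ∀ j : Fin (n+1), (j : ℕ) < ((i.castSucc : Fin (n+1)) : ℕ) → F j = 1 := by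
          intro j hj
          induction j using Fin.lastCases with
          | last => simp at hj; omega
          | cast j =>
            rw [hF, Fin.snoc_castSucc]
            exact h1a j (hz' j (by simpa using hj))
        refine ⟨(List.ofFn F).prod, ?_, ?_⟩
        · have : (List.ofFn F).prod ∈ (N : Set G) := by
            rw [hNcar]
            exact ⟨F, hFm, hFz, rfl⟩
          exact this
        · rw [hπfull F hFm]
          rw [show (fun j : Fin n => π (F j.castSucc)) = f' from funext fun j => by
            rw [hF, Fin.snoc_castSucc]; exact hπa j]
          exact hp'
    -- Step E : permutation plumbing
    set p : Fin (n+1) := σ.symm (Fin.last n) with hp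
    have hσp : σ p = Fin.last n := σ.apply_symm_apply _
    have hep : ∀ j : Fin n, σ (p.succAbove j) ≠ Fin.last n := by
      intro j h
      exact Fin.succAbove_ne p j (σ.injective (h.trans hσp.symm))
    set τ : Fin n → Fin n := fun j => (σ (p.succAbove j)).castPred (hep j) with hτ
    have hτc : ∀ j, (τ j).castSucc = σ (p.succAbove j) := fun j => Fin.castSucc_castPred _ _
    have hτinj : Function.Injective τ := by
      intro a b hab
      have h2 : σ (p.succAbove a) = σ (p.succAbove b) := by
        rw [← hτc, ← hτc, hab]
      exact Fin.succAbove_right_injective (σ.injective h2)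
    set σ' : Equiv.Perm (Fin n) := Equiv.ofBijective τ (Finite.injective_iff_bijective.mp hτinj)
      with hσ'
    have hσ'G : ∀ j, Gs' (σ' j) = (Gs (σ (p.succAbove j))).map π := by
      intro j
      show (Gs ((σ' j).castSucc)).map π = _
      rw [show σ' j = τ j from rfl, hτc]
    -- intersection of distinct factors is trivial
    have hdisj : ∀ m : Fin (n+1), m ≠ Fin.last n → ∀ x : G,
        x ∈ Gs m → x ∈ Gs (Fin.last n) → x = 1 := by
      intro m hm x hxm hxl
      have hm1 : ∀ i, (if i = m then x else 1) ∈ Gs i := by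
        intro i
        by_cases h : i = m
        · rw [if_pos h, h]; exact hxm
        · rw [if_neg h]; exact one_mem _
      have hm2 : ∀ i, (if i = Fin.last n then x else 1) ∈ Gs i := by
        intro i
        by_cases h : i = Fin.last n
        · rw [if_pos h, h]; exact hxl
        · rw [if_neg h]; exact one_mem _
      have heq := (huniq x).unique ⟨hm1, prod_ofFn_single m x⟩ ⟨hm2, prod_ofFn_single _ x⟩
      have h2 := congrFun heq m
      rw [if_pos rfl, if_neg hm] at h2
      exact h2
    -- splitting the product at position p
    have hsplit : ∀ f : Fin (n+1) → G,
        (List.ofFn f).prod =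
          (List.ofFn fun j : Fin n => f (p.succAbove j)).prod *
          (((List.ofFn fun j : Fin n => f (p.succAbove j)).drop (p : ℕ)).prod⁻¹ * f p *
           ((List.ofFn fun j : Fin n => f (p.succAbove j)).drop (p : ℕ)).prod) := by
      intro f
      rw [prod_ofFn_split f p]
      rw [show (List.ofFn fun j : Fin n => f (p.succAbove j)).prod =
          ((List.ofFn fun j : Fin n => f (p.succAbove j)).take (p : ℕ)).prod *
          ((List.ofFn fun j : Fin n => f (p.succAbove j)).drop (p : ℕ)).prod from by
        rw [← List.prod_append, List.take_append_drop]]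
      group
    -- the unique factorization downstairs
    obtain ⟨f', ⟨hm', hp'⟩, hf'uniq⟩ := IH Gs' huniq' hnorm' σ' (π g)
    -- every factorization upstairs projects to f'
    have hq : ∀ fa : Fin (n+1) → G, (∀ i, fa i ∈ Gs (σ i)) → (List.ofFn fa).prod = g →
        (fun j : Fin n => π (fa (p.succAbove j))) = f' := by
      intro fa hma hpa
      have hfapL : fa p ∈ Gs (Fin.last n) := by
        have := hma p
        rwa [hσp] at this
      have hyaL : ((List.ofFn fun j : Fin n => fa (p.succAbove j)).drop (p : ℕ)).prod⁻¹ * fa p *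
          ((List.ofFn fun j : Fin n => fa (p.succAbove j)).drop (p : ℕ)).prod ∈
          Gs (Fin.last n) := by
        have := hLn.conj_mem _ hfapL
          (((List.ofFn fun j : Fin n => fa (p.succAbove j)).drop (p : ℕ)).prod⁻¹)
        rwa [inv_inv] at this
      apply hf'uniq
      constructor
      · intro j
        rw [hσ'G j]
        exact ⟨fa (p.succAbove j), hma _, rfl⟩
      · calc (List.ofFn fun j : Fin n => π (fa (p.succAbove j))).prod
            = π (List.ofFn fun j : Fin n => fa (p.succAbove j)).prod := (hπprod n _).symm
          _ = π ((List.ofFn fa).prod) := by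
              rw [hsplit fa, map_mul, (hker _).2 hyaL, mul_one]
          _ = π g := by rw [hpa]
    -- lift f' to a factorization upstairs
    have hlift : ∀ j, ∃ y, y ∈ Gs (σ (p.succAbove j)) ∧ π y = f' j := by
      intro j
      have := hm' j
      rw [hσ'G j] at this
      simpa [Subgroup.mem_map] using this
    choose u hu hπu using hlift
    have hπP : π (List.ofFn u).prod = π g := by
      rw [hπprod, show (fun j => π (u j)) = f' from funext hπu]
      exact hp'
    have hyL : (List.ofFn u).prod⁻¹ * g ∈ Gs (Fin.last n) := by
      rw [← hker, map_mul, map_inv, hπP]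
      simp
    set xv : G := ((List.ofFn u).drop (p : ℕ)).prod * ((List.ofFn u).prod⁻¹ * g) *
        (((List.ofFn u).drop (p : ℕ)).prod)⁻¹ with hxv
    have hxL : xv ∈ Gs (Fin.last n) := hLn.conj_mem _ hyL _
    refine ⟨p.insertNth xv u, ⟨?_, ?_⟩, ?_⟩
    · intro i
      rcases eq_or_ne i p with rfl | h
      · rw [Fin.insertNth_apply_same, hσp]
        exact hxL
      · obtain ⟨j, rfl⟩ := Fin.exists_succAbove_eq h
        rw [Fin.insertNth_apply_succAbove]
        exact hu j
    · have hins : (fun j : Fin n => (p.insertNth xv u : Fin (n+1) → G) (p.succAbove j)) = u :=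
        funext fun j => @Fin.insertNth_apply_succAbove n (fun _ => G) p xv u j
      rw [hsplit (p.insertNth xv u : Fin (n+1) → G), hins, Fin.insertNth_apply_same]
      rw [hxv]
      group
    · intro f₂ ⟨hm₂, hp₂⟩
      have huu : (fun j : Fin n => f₂ (p.succAbove j)) = u := by
        funext j
        have h1 : π (f₂ (p.succAbove j)) = π (u j) := by
          rw [congrFun (hq f₂ hm₂ hp₂) j]
          exact (hπu j).symm
        have h2 : (u j)⁻¹ * f₂ (p.succAbove j) ∈ Gs (σ (p.succAbove j)) :=
          mul_mem (inv_mem (hu j)) (hm₂ _)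
        have h3 : (u j)⁻¹ * f₂ (p.succAbove j) ∈ Gs (Fin.last n) := by
          rw [← hker, map_mul, map_inv, h1]
          simp
        have h4 := hdisj _ (hep j) _ h2 h3
        have h5 : u j = f₂ (p.succAbove j) := by
          rwa [inv_mul_eq_one] at h4
        exact h5.symm
      have hpex : (List.ofFn u).prod *
          (((List.ofFn u).drop (p : ℕ)).prod⁻¹ * xv *
            ((List.ofFn u).drop (p : ℕ)).prod) = g := by
        rw [hxv]; group
      have hp₂' := hp₂
      rw [hsplit f₂, huu] at hp₂'
      -- cancel to identify the p-th component
      have hcancel : f₂ p = xv := by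
        have h6 := hp₂'.trans hpex.symm
        have h7 := mul_left_cancel h6
        have h8 := mul_right_cancel h7
        exact mul_left_cancel h8
      funext i
      rcases eq_or_ne i p with rfl | h
      · rw [Fin.insertNth_apply_same]
        exact hcancel
      · obtain ⟨j, rfl⟩ := Fin.exists_succAbove_eq h
        rw [Fin.insertNth_apply_succAbove]
        exact congrFun huu j

/-- Let `G` be a group with subgroups `G₁, …, Gₙ` such that `G = G₁ ⋯ Gₙ` with uniqueness of
expression, and such that `Gᵢ ⋯ Gₙ` is a normal subgroup of `G` for all `1 ≤ i ≤ n`. Then for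
every permutation `σ ∈ Sₙ` we have `G = G_{σ(1)} ⋯ G_{σ(n)}` with uniqueness of expression. -/
theorem prod_decomposition_perm {G : Type*} [Group G] (n : ℕ) (Gs : Fin n → Subgroup G)
    (huniq : ∀ g : G, ∃! f : Fin n → G, (∀ i : Fin n, f i ∈ Gs i) ∧ (List.ofFn f).prod = g)
    (hnorm : ∀ i : Fin n, ∃ N : Subgroup G, N.Normal ∧
      (N : Set G) = {g : G | ∃ f : Fin n → G, (∀ j : Fin n, f j ∈ Gs j) ∧
        (∀ j : Fin n, (j : ℕ) < (i : ℕ) → f j = 1) ∧ (List.ofFn f).prod = g}) :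
    ∀ σ : Equiv.Perm (Fin n), ∀ g : G,
      ∃! f : Fin n → G, (∀ i : Fin n, f i ∈ Gs (σ i)) ∧ (List.ofFn f).prod = g := by
  exact key_perm n Gs huniq hnorm
end
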